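/- The function $g:(0,\infty)\to[0,\infty)$ defined by $g(z) = -\ln z$ for $z \in (0,\bar c]$, $g(z) = (z-1)^2/(2\bar c(1-\bar c))$ for $z \in (\bar c, 1]$, and $g(z)=0$ for $z > 1$, is continuously differentiable, convex, and non-increasing, where $\bar c \in [1/4,1/3]$ is the smallest solution of $2c\ln(1/c)=1-c$. -/

import Mathlib

/-!
On `(0, c]` the function is `-log z`, on `[c, 1]` a parabola with vertex at `1`, and `0`
beyond. The equation `2 c log (1 / c) = 1 - c` is exactly what makes the values of the first two
pieces agree at `c`; their slopes `-1 / c` and `(c - 1) / (c (1 - c))` agree for every `c ∈ (0, 1)`, and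
at `1` value and slope of the parabola vanish. Hence `g` is differentiable on `(0, ∞)` with the
continuous piecewise derivative `-1 / z`, `(z - 1) / (c (1 - c))`, `0`. Each piece of it is
non-decreasing and they match at the junctions, so `g'` is non-decreasing, and non-positive since
it vanishes beyond `1`: `g` is convex and non-increasing.
-/

open Set

section Gluing

variable {α β : Type*} [LinearOrder α] {f₁ f₂ : α → β} {a : α}

theorem eqOn_ite_le_Iic : EqOn (fun z => if z ≤ a then f₁ z else f₂ z) f₁ (Iic a) :=
  fun _ hz => if_pos hz

theorem eqOn_ite_le_Ici (hf : f₁ a = f₂ a) :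
    EqOn (fun z => if z ≤ a then f₁ z else f₂ z) f₂ (Ici a) := by
  intro z hz
  rcases (mem_Ici.1 hz).eq_or_lt with rfl | hz
  · simp [hf]
  · simp [hz.not_ge]

theorem MonotoneOn.ite_le [Preorder β] {s : Set α} (ha : a ∈ s)
    (h₁ : MonotoneOn f₁ (s ∩ Iic a)) (h₂ : MonotoneOn f₂ (s ∩ Ici a)) (hf : f₁ a = f₂ a) :
    MonotoneOn (fun z => if z ≤ a then f₁ z else f₂ z) s := by
  intro x hx y hy hxy
  by_cases hya : y ≤ a
  · simp only [hxy.trans hya, hya, if_true]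
    exact h₁ ⟨hx, hxy.trans hya⟩ ⟨hy, hya⟩ hxy
  have hay : a ≤ y := (not_le.1 hya).le
  simp only [hya, if_false]
  by_cases hxa : x ≤ a
  · simp only [hxa, if_true]
    calc f₁ x ≤ f₁ a := h₁ ⟨hx, hxa⟩ ⟨ha, le_rfl⟩ hxa
      _ = f₂ a := hf
      _ ≤ f₂ y := h₂ ⟨ha, le_rfl⟩ ⟨hy, hay⟩ hay
  · simp only [hxa, if_false]
    exact h₂ ⟨hx, (not_le.1 hxa).le⟩ ⟨hy, hay⟩ hxy

theorem continuousAt_ite_le [TopologicalSpace α] [OrderClosedTopology α] [TopologicalSpace β]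
    {x : α} (h₁ : x ≤ a → ContinuousAt f₁ x) (h₂ : a ≤ x → ContinuousAt f₂ x)
    (hf : f₁ a = f₂ a) : ContinuousAt (fun z => if z ≤ a then f₁ z else f₂ z) x := by
  rcases lt_trichotomy x a with hxa | rfl | hxa
  · exact ((h₁ hxa.le).continuousWithinAt.congr eqOn_ite_le_Iic
      (eqOn_ite_le_Iic hxa.le)).continuousAt (Iic_mem_nhds hxa)
  · have := ((h₁ le_rfl).continuousWithinAt.congr eqOn_ite_le_Iic
      (eqOn_ite_le_Iic self_mem_Iic)).union
      ((h₂ le_rfl).continuousWithinAt.congr (eqOn_ite_le_Ici hf) (eqOn_ite_le_Ici hf self_mem_Ici))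
    rwa [Iic_union_Ici, continuousWithinAt_univ] at this
  · exact ((h₂ hxa.le).continuousWithinAt.congr (eqOn_ite_le_Ici hf)
      (eqOn_ite_le_Ici hf hxa.le)).continuousAt (Ici_mem_nhds hxa)

end Gluing

theorem hasDerivAt_ite_le {F : Type*} [NormedAddCommGroup F] [NormedSpace ℝ F]
    {f₁ f₂ f₁' f₂' : ℝ → F} {a x : ℝ}
    (h₁ : x ≤ a → HasDerivAt f₁ (f₁' x) x) (h₂ : a ≤ x → HasDerivAt f₂ (f₂' x) x)
    (hf : f₁ a = f₂ a) (hf' : f₁' a = f₂' a) :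
    HasDerivAt (fun z => if z ≤ a then f₁ z else f₂ z) (if x ≤ a then f₁' x else f₂' x) x := by
  rcases lt_trichotomy x a with hxa | rfl | hxa
  · rw [if_pos hxa.le]
    exact ((h₁ hxa.le).hasDerivWithinAt.congr eqOn_ite_le_Iic
      (eqOn_ite_le_Iic hxa.le)).hasDerivAt (Iic_mem_nhds hxa)
  · rw [if_pos le_rfl]
    have := ((h₁ le_rfl).hasDerivWithinAt.congr eqOn_ite_le_Iic
      (eqOn_ite_le_Iic self_mem_Iic)).union
      (hf' ▸ (h₂ le_rfl).hasDerivWithinAt.congr (eqOn_ite_le_Ici hf)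
        (eqOn_ite_le_Ici hf self_mem_Ici))
    rwa [Iic_union_Ici, hasDerivWithinAt_univ] at this
  · rw [if_neg hxa.not_ge]
    exact ((h₂ hxa.le).hasDerivWithinAt.congr (eqOn_ite_le_Ici hf)
      (eqOn_ite_le_Ici hf hxa.le)).hasDerivAt (Ici_mem_nhds hxa)

theorem contDiffOn_one_of_hasDerivAt {f f' : ℝ → ℝ} {s : Set ℝ} (hs : IsOpen s)
    (hf : ∀ x ∈ s, HasDerivAt f (f' x) x) (hf' : ContinuousOn f' s) : ContDiffOn ℝ 1 f s := by
  rw [show (1 : WithTop ℕ∞) = 0 + 1 from rfl, contDiffOn_succ_iff_deriv_of_isOpen hs,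
    contDiffOn_zero]
  exact ⟨fun x hx => (hf x hx).differentiableAt.differentiableWithinAt, by simp,
    hf'.congr fun x hx => (hf x hx).deriv⟩

theorem MonotoneOn.convexOn_of_hasDerivAt {f f' : ℝ → ℝ} {s : Set ℝ} (hs : IsOpen s)
    (hconv : Convex ℝ s) (hf : ∀ x ∈ s, HasDerivAt f (f' x) x) (hf' : MonotoneOn f' s) :
    ConvexOn ℝ s f := by
  have hderiv : EqOn (deriv f) f' s := fun x hx => (hf x hx).deriv
  refine MonotoneOn.convexOn_of_deriv hconv
    (fun x hx => (hf x hx).continuousAt.continuousWithinAt) ?_ ?_ <;> rw [hs.interior_eq]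
  · exact fun x hx => (hf x hx).differentiableAt.differentiableWithinAt
  · exact hf'.congr hderiv.symm

section

variable {c x : ℝ}

noncomputable def quadTail (c z : ℝ) : ℝ := if z ≤ 1 then (z - 1) ^ 2 / (2 * c * (1 - c)) else 0

noncomputable def quadTailDeriv (c z : ℝ) : ℝ := if z ≤ 1 then (z - 1) / (c * (1 - c)) else 0

noncomputable def logSurrogate (c z : ℝ) : ℝ := if z ≤ c then -Real.log z else quadTail c z

noncomputable def logSurrogateDeriv (c z : ℝ) : ℝ := if z ≤ c then -z⁻¹ else quadTailDeriv c z

theorem hasDerivAt_quadTail (c x : ℝ) : HasDerivAt (quadTail c) (quadTailDeriv c x) x := by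
  refine hasDerivAt_ite_le (f₁ := fun z => (z - 1) ^ 2 / (2 * c * (1 - c)))
    (f₁' := fun z => (z - 1) / (c * (1 - c))) (f₂ := fun _ => 0) (f₂' := fun _ => 0)
    (fun _ => ?_) (fun _ => hasDerivAt_const x 0) (by simp) (by simp)
  refine ((((hasDerivAt_id' x).sub_const 1).fun_pow 2).div_const _).congr_deriv ?_
  rw [mul_assoc 2 c]
  norm_num [mul_div_mul_left]

theorem continuous_quadTailDeriv (c : ℝ) : Continuous (quadTailDeriv c) :=
  continuous_iff_continuousAt.2 fun _ => continuousAt_ite_le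
    (fun _ => ((continuous_id.sub continuous_const).div_const _).continuousAt)
    (fun _ => continuousAt_const) (by simp)

theorem monotone_quadTailDeriv (hc0 : 0 < c) (hc1 : c < 1) : Monotone (quadTailDeriv c) := by
  have hk : 0 < c * (1 - c) := mul_pos hc0 (sub_pos.2 hc1)
  rw [← monotoneOn_univ]
  exact MonotoneOn.ite_le (mem_univ 1)
    (fun x _ y _ hxy => div_le_div_of_nonneg_right (sub_le_sub_right hxy 1) hk.le)
    monotoneOn_const (by simp)

theorem neg_log_eq_quadTail (hc0 : 0 < c) (hc1 : c < 1)
    (hsol : 2 * c * Real.log (1 / c) = 1 - c) : -Real.log c = quadTail c c := by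
  rw [one_div, Real.log_inv] at hsol
  rw [quadTail, if_pos hc1.le]
  have : 1 - c ≠ 0 := (sub_pos.2 hc1).ne'
  field_simp
  linear_combination (1 - c) * hsol

theorem neg_inv_eq_quadTailDeriv (hc0 : 0 < c) (hc1 : c < 1) : -c⁻¹ = quadTailDeriv c c := by
  rw [quadTailDeriv, if_pos hc1.le]
  have : 1 - c ≠ 0 := (sub_pos.2 hc1).ne'
  field_simp
  ring

theorem hasDerivAt_logSurrogate (hc0 : 0 < c) (hc1 : c < 1)
    (hsol : 2 * c * Real.log (1 / c) = 1 - c) (hx : 0 < x) :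
    HasDerivAt (logSurrogate c) (logSurrogateDeriv c x) x :=
  hasDerivAt_ite_le (f₁ := fun z => -Real.log z) (f₁' := fun z => -z⁻¹)
    (fun _ => (Real.hasDerivAt_log hx.ne').neg)
    (fun _ => hasDerivAt_quadTail c x) (neg_log_eq_quadTail hc0 hc1 hsol)
    (neg_inv_eq_quadTailDeriv hc0 hc1)

theorem continuousOn_logSurrogateDeriv (hc0 : 0 < c) (hc1 : c < 1) :
    ContinuousOn (logSurrogateDeriv c) (Ioi 0) := fun _ hx =>
  (continuousAt_ite_le (fun _ => (continuousAt_inv₀ (ne_of_gt hx)).neg)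
    (fun _ => (continuous_quadTailDeriv c).continuousAt)
    (neg_inv_eq_quadTailDeriv hc0 hc1)).continuousWithinAt

theorem monotoneOn_logSurrogateDeriv (hc0 : 0 < c) (hc1 : c < 1) :
    MonotoneOn (logSurrogateDeriv c) (Ioi 0) :=
  MonotoneOn.ite_le hc0
    (fun _ hx _ _ hxy => neg_le_neg (inv_anti₀ hx.1 hxy))
    ((monotone_quadTailDeriv hc0 hc1).monotoneOn _) (neg_inv_eq_quadTailDeriv hc0 hc1)

theorem logSurrogateDeriv_nonpos (hc0 : 0 < c) (hc1 : c < 1) (hx : 0 < x) :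
    logSurrogateDeriv c x ≤ 0 := by
  have hx1 : 1 < x + 1 := by linarith
  calc logSurrogateDeriv c x ≤ logSurrogateDeriv c (x + 1) :=
        monotoneOn_logSurrogateDeriv hc0 hc1 hx (by simp; linarith) (by linarith)
    _ = 0 := by
        rw [logSurrogateDeriv, if_neg (by linarith), quadTailDeriv, if_neg hx1.not_ge]

end

theorem stmt_1_general (cbar : ℝ)
    (hpos : 0 < cbar)
    (hsol : 2 * cbar * Real.log (1 / cbar) = 1 - cbar)
    (hcbar : cbar ∈ Set.Icc (1 / 4 : ℝ) (1 / 3))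
    (g : ℝ → ℝ)
    (hg : ∀ z : ℝ, g z =
      if z ≤ cbar then -Real.log z
      else if z ≤ 1 then (z - 1) ^ 2 / (2 * cbar * (1 - cbar))
      else 0) :
    ContDiffOn ℝ 1 g (Set.Ioi (0 : ℝ)) ∧
      ConvexOn ℝ (Set.Ioi (0 : ℝ)) g ∧
      AntitoneOn g (Set.Ioi (0 : ℝ)) := by
  have hc1 : cbar < 1 := hcbar.2.trans_lt (by norm_num)
  obtain rfl : g = logSurrogate cbar := funext hg
  have hderiv : ∀ x ∈ Ioi (0 : ℝ), HasDerivAt (logSurrogate cbar) (logSurrogateDeriv cbar x) x :=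
    fun _ hx => hasDerivAt_logSurrogate hpos hc1 hsol hx
  refine ⟨contDiffOn_one_of_hasDerivAt isOpen_Ioi hderiv
      (continuousOn_logSurrogateDeriv hpos hc1),
    (monotoneOn_logSurrogateDeriv hpos hc1).convexOn_of_hasDerivAt isOpen_Ioi (convex_Ioi 0)
      hderiv, ?_⟩
  refine antitoneOn_of_hasDerivWithinAt_nonpos (f' := logSurrogateDeriv cbar) (convex_Ioi 0)
    (fun x hx => (hderiv x hx).continuousAt.continuousWithinAt) ?_ ?_ <;> rw [interior_Ioi]
  · exact fun x hx => (hderiv x hx).hasDerivWithinAt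
  · exact fun x hx => logSurrogateDeriv_nonpos hpos hc1 hx

/-- The function `g : (0,∞) → [0,∞)` defined by `g z = -ln z` for `z ∈ (0, c̄]`,
`g z = (z-1)^2 / (2 c̄ (1 - c̄))` for `z ∈ (c̄, 1]` and `g z = 0` for `z > 1`
is continuously differentiable, convex and non-increasing on `(0,∞)`,
where `c̄ ∈ [1/4, 1/3]` is the smallest positive solution of `2c ln(1/c) = 1 - c`. -/
theorem stmt_1 (cbar : ℝ)
    (hpos : 0 < cbar)
    (hsol : 2 * cbar * Real.log (1 / cbar) = 1 - cbar)
    (hmin : ∀ c : ℝ, 0 < c → 2 * c * Real.log (1 / c) = 1 - c → cbar ≤ c)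
    (hcbar : cbar ∈ Set.Icc (1 / 4 : ℝ) (1 / 3))
    (g : ℝ → ℝ)
    (hg : ∀ z : ℝ, g z =
      if z ≤ cbar then -Real.log z
      else if z ≤ 1 then (z - 1) ^ 2 / (2 * cbar * (1 - cbar))
      else 0)
    (hrange : ∀ z : ℝ, 0 < z → 0 ≤ g z) :
    ContDiffOn ℝ 1 g (Set.Ioi (0 : ℝ)) ∧
      ConvexOn ℝ (Set.Ioi (0 : ℝ)) g ∧
      AntitoneOn g (Set.Ioi (0 : ℝ)) :=
  stmt_1_general cbar hpos hsol hcbar g hg
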